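/- Assume the loss ℓ has values in [0,1]. Then for all s, t > 0 and every K ∈ ℕ, μ^n{ x ∈ X^n : π{ h ∈ H : L̂(h,x) − L(h) > s } > t } ≤ e^{−2Kt²} + K e^{−2ns²}. -/

import Mathlib

open MeasureTheory Real Filter

noncomputable section

variable {H X : Type*} [MeasurableSpace H] [MeasurableSpace X]

/-- Empirical loss of hypothesis `h` on sample `x`. -/
def empLoss (ℓ : H → X → ℝ) (n : ℕ) (h : H) (x : Fin n → X) : ℝ :=
  (∑ i, ℓ h (x i)) / n

/-- True (expected) loss of hypothesis `h`. -/
def trueLoss (ℓ : H → X → ℝ) (μ : Measure X) (h : H) : ℝ :=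
  ∫ z, ℓ h z ∂μ

/-- Partition function of the Gibbs posterior. -/
def partitionZ (ℓ : H → X → ℝ) (pr : Measure H) (n : ℕ) (β : ℝ) (x : Fin n → X) : ℝ :=
  ∫ h, Real.exp (-β * empLoss ℓ n h x) ∂pr

/-- Gibbs posterior at inverse temperature `β`. -/
def gibbs (ℓ : H → X → ℝ) (pr : Measure H) (n : ℕ) (β : ℝ) (x : Fin n → X) : Measure H :=
  pr.withDensity fun h =>
    ENNReal.ofReal (Real.exp (-β * empLoss ℓ n h x) / partitionZ ℓ pr n β x)

/-- Joint measure ρ of the sample and the Gibbs draw, on H × Xⁿ. -/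
def jointRho (ℓ : H → X → ℝ) (μ : Measure X) (pr : Measure H) (n : ℕ) (β : ℝ) :
    Measure (H × (Fin n → X)) :=
  (Measure.pi fun _ : Fin n => μ).bind fun x => (gibbs ℓ pr n β x).map fun h => (h, x)

/-- Cumulative distribution function of the empirical loss under the prior. -/
def phiHat (ℓ : H → X → ℝ) (pr : Measure H) (n : ℕ) (r : ℝ) (x : Fin n → X) : ℝ :=
  (pr {g | empLoss ℓ n g x ≤ r}).toReal

/-- Complexity measure Λ_β(h,x). -/
def Lam (ℓ : H → X → ℝ) (pr : Measure H) (n : ℕ) (β : ℝ) (h : H) (x : Fin n → X) : ℝ :=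
  sInf {v : ℝ | ∃ r : ℝ, 0 < phiHat ℓ pr n (empLoss ℓ n h x + r) x ∧
    v = β * r + Real.log (1 / phiHat ℓ pr n (empLoss ℓ n h x + r) x)}

/-- Relative entropy of two Bernoulli variables. -/
def klBin (p q : ℝ) : ℝ :=
  p * Real.log (p / q) + (1 - p) * Real.log ((1 - p) / (1 - q))

/-!
Fix `K`. If a sample `x` is bad, i.e. the prior mass `q` of the hypotheses whose empirical
loss exceeds their true loss by more than `s` is larger than `t`, then Bernoulli's inequality
gives `1 ≤ (1 - q)^K + K q ≤ e^{-2Kt²} + K q`. Markov's inequality therefore bounds the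
probability of a bad sample by `e^{-2Kt²} + K 𝔼[q]`, and by Fubini `𝔼[q]` is the prior average
of the per-hypothesis deviation probabilities, each at most `e^{-2ns²}` by Hoeffding.
-/

open ProbabilityTheory Real
open scoped ENNReal

theorem measureReal_pi_mean_sub_integral_ge_le
    (μ : Measure X) [IsProbabilityMeasure μ] {f : X → ℝ} (hf : Measurable f)
    (hf01 : ∀ z, f z ∈ Set.Icc (0 : ℝ) 1) {n : ℕ} (hn : 0 < n) {s : ℝ} (hs : 0 ≤ s) :
    (Measure.pi fun _ : Fin n => μ).real {x | s ≤ (∑ i, f (x i)) / n - ∫ z, f z ∂μ} ≤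
      exp (-2 * n * s ^ 2) := by
  set P := Measure.pi fun _ : Fin n => μ
  have h_indep : iIndepFun (fun (i : Fin n) (x : Fin n → X) => f (x i) - ∫ z, f z ∂μ) P :=
    iIndepFun_pi (X := fun _ z => f z - ∫ z, f z ∂μ) fun _ => (hf.sub_const _).aemeasurable
  have h_subG : ∀ i : Fin n, HasSubgaussianMGF (fun x : Fin n → X => f (x i) - ∫ z, f z ∂μ)
      ((‖(1 : ℝ) - 0‖₊ / 2) ^ 2) P := by
    intro i
    have := hasSubgaussianMGF_of_mem_Icc (μ := P) (X := fun x => f (x i))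
      (hf.comp (measurable_pi_apply i)).aemeasurable (ae_of_all _ fun x => hf01 (x i))
    rwa [integral_comp_eval hf.aestronglyMeasurable] at this
  have hn' : (0 : ℝ) < n := by exact_mod_cast hn
  have key := HasSubgaussianMGF.measure_sum_ge_le_of_iIndepFun h_indep
    (s := Finset.univ) (fun i _ => h_subG i) (ε := n * s) (by positivity)
  convert key using 2
  · ext x
    simp only [Set.mem_ofPred_eq, Finset.sum_sub_distrib, Finset.sum_const, Finset.card_univ,
      Fintype.card_fin, nsmul_eq_mul]
    rw [le_sub_iff_add_le, le_div_iff₀ hn']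
    constructor <;> intro h <;> linarith
  · simp [field]

theorem one_sub_le_exp_neg_two_mul_sq {t : ℝ} (ht : 0 ≤ t) : 1 - t ≤ exp (-2 * t ^ 2) := by
  set g : ℝ → ℝ := fun u => (1 - u) * exp (2 * u ^ 2)
  have hg : ∀ u, HasDerivAt g (-(1 - 2 * u) ^ 2 * exp (2 * u ^ 2)) u := fun u => by
    refine (((hasDerivAt_id u).const_sub 1).mul
      (((hasDerivAt_pow 2 u).const_mul 2).exp)).congr_deriv ?_
    simp only [id]
    ring
  have hanti : Antitone g := antitone_of_deriv_nonpos (fun u => (hg u).differentiableAt)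
    fun u => (hg u).deriv ▸ mul_nonpos_of_nonpos_of_nonneg (neg_nonpos.2 (sq_nonneg _))
      (exp_pos _).le
  have h := hanti ht
  simp only [g, sub_zero, one_mul, zero_pow two_ne_zero, mul_zero, exp_zero] at h
  rwa [mul_comm, ← le_div_iff₀' (exp_pos _), one_div, ← exp_neg, ← neg_mul] at h

theorem one_le_exp_add_mul_of_lt {q t : ℝ} (hq : q ≤ 1) (ht : 0 ≤ t) (htq : t < q) (K : ℕ) :
    1 ≤ exp (-2 * K * t ^ 2) + K * q := by
  have bernoulli : 1 - K * q ≤ (1 - q) ^ K := by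
    simpa [sub_eq_add_neg] using one_add_mul_le_pow (a := -q) (by linarith) K
  have mono : (1 - q) ^ K ≤ (1 - t) ^ K := pow_le_pow_left₀ (by linarith) (by linarith) K
  have hexp : (1 - t) ^ K ≤ exp (-2 * K * t ^ 2) := by
    calc (1 - t) ^ K ≤ exp (-2 * t ^ 2) ^ K :=
          pow_le_pow_left₀ (by linarith) (one_sub_le_exp_neg_two_mul_sq ht) K
      _ = exp (-2 * K * t ^ 2) := by rw [← exp_nat_mul]; ring_nf
  linarith

theorem measure_lt_toReal_le_exp_add_mul_lintegral {Y : Type*} [MeasurableSpace Y]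
    (P : Measure Y) [IsProbabilityMeasure P] {q : Y → ℝ≥0∞} (hq : Measurable q)
    (hq1 : ∀ y, q y ≤ 1) {t : ℝ} (ht : 0 ≤ t) (K : ℕ) :
    P {y | t < (q y).toReal} ≤ ENNReal.ofReal (exp (-2 * K * t ^ 2)) + K * ∫⁻ y, q y ∂P := by
  set g : Y → ℝ≥0∞ := fun y => ENNReal.ofReal (exp (-2 * K * t ^ 2)) + K * q y
  have hg : Measurable g := measurable_const.add (hq.const_mul _)
  have hsub : {y | t < (q y).toReal} ⊆ {y | 1 ≤ g y} := fun y hy => by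
    have hq1' : (q y).toReal ≤ 1 :=
      ENNReal.toReal_le_of_le_ofReal zero_le_one (by simpa using hq1 y)
    have := one_le_exp_add_mul_of_lt hq1' ht hy K
    calc (1 : ℝ≥0∞) = ENNReal.ofReal 1 := ENNReal.ofReal_one.symm
      _ ≤ ENNReal.ofReal (exp (-2 * K * t ^ 2) + K * (q y).toReal) :=
        ENNReal.ofReal_le_ofReal this
      _ = g y := by
        rw [ENNReal.ofReal_add (exp_pos _).le (by positivity), ENNReal.ofReal_mul (by positivity),
          ENNReal.ofReal_natCast,
          ENNReal.ofReal_toReal (ne_top_of_le_ne_top ENNReal.one_ne_top (hq1 y))]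
  calc P {y | t < (q y).toReal} ≤ P {y | 1 ≤ g y} := measure_mono hsub
    _ ≤ ∫⁻ y, g y ∂P := by simpa using mul_meas_ge_le_lintegral₀ hg.aemeasurable 1
    _ = _ := by
      rw [lintegral_add_left measurable_const, lintegral_const, lintegral_const_mul _ hq,
        measure_univ, mul_one]

theorem measure_lt_measure_slice_le {Y : Type*} [MeasurableSpace Y]
    (pr : Measure H) [IsProbabilityMeasure pr] (P : Measure Y) [IsProbabilityMeasure P]
    {A : Set (H × Y)} (hA : MeasurableSet A) {δ : ℝ≥0∞} (hδ : ∀ h, P (Prod.mk h ⁻¹' A) ≤ δ)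
    {t : ℝ} (ht : 0 ≤ t) (K : ℕ) :
    P {y | t < (pr ((·, y) ⁻¹' A)).toReal} ≤ ENNReal.ofReal (exp (-2 * K * t ^ 2)) + K * δ := by
  have fubini : ∫⁻ y, pr ((·, y) ⁻¹' A) ∂P = ∫⁻ h, P (Prod.mk h ⁻¹' A) ∂pr := by
    rw [← Measure.prod_apply_symm hA, Measure.prod_apply hA]
  calc P {y | t < (pr ((·, y) ⁻¹' A)).toReal}
      ≤ ENNReal.ofReal (exp (-2 * K * t ^ 2)) + K * ∫⁻ y, pr ((·, y) ⁻¹' A) ∂P :=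
        measure_lt_toReal_le_exp_add_mul_lintegral P (measurable_measure_prodMk_right hA)
          (fun _ => prob_le_one) ht K
    _ ≤ ENNReal.ofReal (exp (-2 * K * t ^ 2)) + K * δ := by
      rw [fubini]
      gcongr
      exact (lintegral_mono hδ).trans_eq (by simp)

theorem measurable_empLoss {ℓ : H → X → ℝ} (hmeas : Measurable (Function.uncurry ℓ)) (n : ℕ) :
    Measurable fun p : H × (Fin n → X) => empLoss ℓ n p.1 p.2 :=
  (Finset.measurable_sum _ fun i _ =>
    hmeas.comp (measurable_fst.prodMk ((measurable_pi_apply i).comp measurable_snd))).div_const _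

theorem measurable_trueLoss {ℓ : H → X → ℝ} (hmeas : Measurable (Function.uncurry ℓ))
    (μ : Measure X) [SFinite μ] : Measurable (trueLoss ℓ μ) :=
  hmeas.stronglyMeasurable.integral_prod_right'.measurable

theorem measure_empLoss_sub_trueLoss_gt_le (μ : Measure X) [IsProbabilityMeasure μ]
    {ℓ : H → X → ℝ} (hmeas : Measurable (Function.uncurry ℓ))
    (hrange : ∀ h z, ℓ h z ∈ Set.Icc (0 : ℝ) 1) {n : ℕ} (hn : 0 < n) {s : ℝ} (hs : 0 ≤ s) (h : H) :
    (Measure.pi fun _ : Fin n => μ) {x | s < empLoss ℓ n h x - trueLoss ℓ μ h} ≤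
      ENNReal.ofReal (exp (-2 * n * s ^ 2)) := by
  calc (Measure.pi fun _ : Fin n => μ) {x | s < empLoss ℓ n h x - trueLoss ℓ μ h}
      ≤ (Measure.pi fun _ : Fin n => μ) {x | s ≤ empLoss ℓ n h x - trueLoss ℓ μ h} :=
        measure_mono fun _ (hx : s < _) => hx.le
    _ ≤ ENNReal.ofReal (exp (-2 * n * s ^ 2)) := by
      rw [← ofReal_measureReal]
      exact ENNReal.ofReal_le_ofReal <| measureReal_pi_mean_sub_integral_ge_le μ
        (hmeas.comp measurable_prodMk_left) (hrange h) hn hs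

theorem statement14
    (μ : Measure X) [IsProbabilityMeasure μ]
    (pr : Measure H) [IsProbabilityMeasure pr]
    (ℓ : H → X → ℝ) (hmeas : Measurable (Function.uncurry ℓ))
    (hrange : ∀ h z, ℓ h z ∈ Set.Icc (0 : ℝ) 1)
    (n : ℕ) (hn : 0 < n) (s t : ℝ) (hs : 0 < s) (ht : 0 < t) (K : ℕ) :
    (Measure.pi fun _ : Fin n => μ)
        {x : Fin n → X | t < (pr {h | s < empLoss ℓ n h x - trueLoss ℓ μ h}).toReal} ≤
      ENNReal.ofReal (Real.exp (-2 * K * t ^ 2) + K * Real.exp (-2 * n * s ^ 2)) := by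
  have hA : MeasurableSet {p : H × (Fin n → X) | s < empLoss ℓ n p.1 p.2 - trueLoss ℓ μ p.1} :=
    measurableSet_lt measurable_const
      ((measurable_empLoss hmeas n).sub ((measurable_trueLoss hmeas μ).comp measurable_fst))
  calc _ ≤ ENNReal.ofReal (exp (-2 * K * t ^ 2)) + K * ENNReal.ofReal (exp (-2 * n * s ^ 2)) :=
        measure_lt_measure_slice_le pr _ hA
          (measure_empLoss_sub_trueLoss_gt_le μ hmeas hrange hn hs.le) ht.le K
    _ = _ := by
      rw [ENNReal.ofReal_add (exp_pos _).le (by positivity), ENNReal.ofReal_mul (by positivity),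
        ENNReal.ofReal_natCast]
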